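/- arXiv:2307.16836 — 4 statements merged into one kernel-verified Lean document; each statement's English description precedes it below -/
import Mathlib

section
/- Let s and l be non-negative integers and let k = 2s + 6l. Then there exists a partition of the set {1, 2, ..., k} into pairwise disjoint subsets Q_1, Q_2, ..., Q_{s+2l} whose union is {1, ..., k}, such that: for each i with 1 ≤ i ≤ l, |Q_i| = 3 and the elements of Q_i sum to k+1; for each i with l+1 ≤ i ≤ s+l, |Q_i| = 2 and the elements of Q_i sum to k+1; and for each i with s+l+1 ≤ i ≤ s+2l, |Q_i| = 3 and the elements of Q_i sum to 2(k+1). -/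
/-!
Write `k = 2s + 6l`. The `s` pairs `{3l + m, k - 3l + 1 - m}` fold the middle interval
`[3l + 1, k - 3l]` onto itself. The first `l` triples take their two small elements from
`[1, 2l]` and their large one from `k - l - 1, k - l - 3, …`; the last `l` triples take one
element from `[2l + 1, 3l]`, one from the top interval `[k - l + 1, k]` and one from
`k - l, k - l - 2, …`. These sets are pairwise disjoint subsets of `[1, k]` whose sizes add
up to `3l + 2s + 3l = k`, so they partition `[1, k]`.
-/

open Finset

theorem Finset.biUnion_eq_of_pairwiseDisjoint_of_sum_card {ι α : Type*} [DecidableEq α]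
    {s : Finset ι} {t : ι → Finset α} {u : Finset α} (hsub : ∀ i ∈ s, t i ⊆ u)
    (hdisj : (s : Set ι).PairwiseDisjoint t) (hcard : ∑ i ∈ s, #(t i) = #u) :
    s.biUnion t = u :=
  eq_of_subset_of_card_le (biUnion_subset.mpr hsub) (by rw [card_biUnion hdisj, hcard])

theorem Finset.sum_triple {α β : Type*} [DecidableEq α] [AddCommMonoid β] (f : α → β)
    {a b c : α} (hab : a ≠ b) (hac : a ≠ c) (hbc : b ≠ c) :
    ∑ x ∈ {a, b, c}, f x = f a + f b + f c := by
  rw [sum_insert (by simp [hab, hac]), sum_pair hbc, add_assoc]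

def zeroSumBlock (s l i : ℕ) : Finset ℕ :=
  if i < l then {i + 1, l + i + 1, 2 * s + 5 * l - 2 * i - 1}
  else if i < s + l then {2 * l + i + 1, 2 * s + 4 * l - i}
  else {i + l + 1 - s, i + s + 4 * l + 1, 4 * s + 7 * l - 2 * i}

section zeroSumBlock

variable {s l i : ℕ}

theorem card_zeroSumBlock_of_lt (hi : i < l) :
    #(zeroSumBlock s l i) = 3 ∧ ∑ a ∈ zeroSumBlock s l i, a = 2 * s + 6 * l + 1 := by
  rw [zeroSumBlock, if_pos hi]
  refine ⟨card_eq_three.mpr ⟨_, _, _, by omega, by omega, by omega, rfl⟩, ?_⟩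
  rw [sum_triple (fun a => a) (by omega) (by omega) (by omega)]
  omega

theorem card_zeroSumBlock_of_le_of_lt (hli : l ≤ i) (his : i < s + l) :
    #(zeroSumBlock s l i) = 2 ∧ ∑ a ∈ zeroSumBlock s l i, a = 2 * s + 6 * l + 1 := by
  rw [zeroSumBlock, if_neg (by omega), if_pos his]
  refine ⟨card_pair (by omega), ?_⟩
  rw [sum_pair (by omega)]
  omega

theorem card_zeroSumBlock_of_le (hsi : s + l ≤ i) (hi : i < s + 2 * l) :
    #(zeroSumBlock s l i) = 3 ∧
      ∑ a ∈ zeroSumBlock s l i, a = 2 * (2 * s + 6 * l + 1) := by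
  rw [zeroSumBlock, if_neg (by omega), if_neg (by omega)]
  refine ⟨card_eq_three.mpr ⟨_, _, _, by omega, by omega, by omega, rfl⟩, ?_⟩
  rw [sum_triple (fun a => a) (by omega) (by omega) (by omega)]
  omega

theorem zeroSumBlock_subset_Icc (hi : i < s + 2 * l) :
    zeroSumBlock s l i ⊆ Icc 1 (2 * s + 6 * l) := by
  intro x hx
  rw [mem_Icc]
  unfold zeroSumBlock at hx
  split_ifs at hx <;> simp only [mem_insert, mem_singleton] at hx <;> omega

theorem disjoint_zeroSumBlock {j : ℕ} (hi : i < s + 2 * l) (hj : j < s + 2 * l)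
    (hij : i ≠ j) : Disjoint (zeroSumBlock s l i) (zeroSumBlock s l j) := by
  rw [disjoint_left]
  intro x hxi hxj
  unfold zeroSumBlock at hxi hxj
  split_ifs at hxi hxj <;> simp only [mem_insert, mem_singleton] at hxi hxj <;> omega

end zeroSumBlock

theorem sum_card_zeroSumBlock (s l : ℕ) :
    ∑ i ∈ range (s + 2 * l), #(zeroSumBlock s l i) = 2 * s + 6 * l := by
  rw [← sum_range_add_sum_Ico _ (by omega : l ≤ s + 2 * l),
    ← sum_Ico_consecutive _ (by omega : l ≤ s + l) (by omega : s + l ≤ s + 2 * l),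
    sum_congr rfl fun i hi => (card_zeroSumBlock_of_lt (mem_range.mp hi)).1,
    sum_congr rfl fun i hi =>
      (card_zeroSumBlock_of_le_of_lt (mem_Ico.mp hi).1 (mem_Ico.mp hi).2).1,
    sum_congr rfl fun i hi =>
      (card_zeroSumBlock_of_le (mem_Ico.mp hi).1 (mem_Ico.mp hi).2).1]
  simp only [sum_const, card_range, Nat.card_Ico, smul_eq_mul]
  omega

/-- **Lemma 1 (Kaplan–Lev–Roditty zero-sum partition).**
Let `s, l` be non-negative integers and `k = 2s + 6l`. Then `{1, …, k}` can be
partitioned into pairwise disjoint subsets `Q 0, …, Q (s + 2l - 1)` (indexed here by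
`Fin (s + 2*l)`, so the first `l` indices play the role of `i ∈ [1, l]`, the next `s`
indices the role of `i ∈ [l+1, s+l]`, and the last `l` indices the role of
`i ∈ [s+l+1, s+2l]`) such that:
* each of the first `l` sets has 3 elements summing to `k + 1`;
* each of the next `s` sets has 2 elements summing to `k + 1`;
* each of the last `l` sets has 3 elements summing to `2 * (k + 1)`. -/
theorem zero_sum_partition (s l k : ℕ) (hk : k = 2 * s + 6 * l) :
    ∃ Q : Fin (s + 2 * l) → Finset ℕ,
      (∀ i j : Fin (s + 2 * l), i ≠ j → Disjoint (Q i) (Q j)) ∧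
      (Finset.univ.biUnion Q = Finset.Icc 1 k) ∧
      (∀ i : Fin (s + 2 * l), (i : ℕ) < l →
        (Q i).card = 3 ∧ (∑ a ∈ Q i, a) = k + 1) ∧
      (∀ i : Fin (s + 2 * l), l ≤ (i : ℕ) → (i : ℕ) < s + l →
        (Q i).card = 2 ∧ (∑ a ∈ Q i, a) = k + 1) ∧
      (∀ i : Fin (s + 2 * l), s + l ≤ (i : ℕ) →
        (Q i).card = 3 ∧ (∑ a ∈ Q i, a) = 2 * (k + 1)) := by
  subst hk
  have hdisj (i j : Fin (s + 2 * l)) (hij : i ≠ j) :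
      Disjoint (zeroSumBlock s l i) (zeroSumBlock s l j) :=
    disjoint_zeroSumBlock i.isLt j.isLt (Fin.val_ne_of_ne hij)
  refine ⟨fun i => zeroSumBlock s l i, hdisj, ?_, fun i hi => card_zeroSumBlock_of_lt hi,
    fun i hli his => card_zeroSumBlock_of_le_of_lt hli his,
    fun i hsi => card_zeroSumBlock_of_le hsi i.isLt⟩
  refine biUnion_eq_of_pairwiseDisjoint_of_sum_card
    (fun i _ => zeroSumBlock_subset_Icc i.isLt) (fun i _ j _ => hdisj i j) ?_
  rw [Fin.sum_univ_eq_sum_range (fun i => #(zeroSumBlock s l i)), sum_card_zeroSumBlock,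
    Nat.card_Icc, Nat.add_sub_cancel]
end

section
/- Let s and l be non-negative integers and let k = 2s + 6l. Define, for 1 ≤ i ≤ l, the sets A_i = {i, l+s+i, k-(l+s+2i)+1} and C_i = {k-i+1, s+3l+1-i, k-(s+3l+1-2i)+1}; and for 1 ≤ i ≤ s, the sets B_i = {l+i, k-l-i+1}. Then these s+2l sets are pairwise disjoint, their union is {1, 2, ..., k}, each A_i has exactly 3 elements summing to k+1, each B_i has exactly 2 elements summing to k+1, and each C_i has exactly 3 elements summing to 2(k+1). -/
/-!
With `k = 2s + 6l`, the interval `[1, k]` is cut into the consecutive pieces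
`[1, l]`, `[l+1, l+s]`, `[l+s+1, s+2l]`, `[s+2l+1, s+3l]`, `[s+3l+1, s+5l]`, `[s+5l+1, 2s+5l]`,
`[2s+5l+1, 2s+6l]`. Each element of a block is an injective affine function of its index
with values in one of these pieces (in `[s+3l+1, s+5l]` the `A`-blocks take the numbers
`s+3l+odd` and the `C`-blocks the numbers `s+3l+even`), and every piece is covered exactly
once. Disjointness, covering, cardinalities and sums are then linear arithmetic.
-/

namespace Finset

theorem sum_triple_s1 {ι M : Type*} [DecidableEq ι] [AddCommMonoid M] {a b c : ι}
    (hab : a ≠ b) (hac : a ≠ c) (hbc : b ≠ c) (f : ι → M) :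
    ∑ x ∈ {a, b, c}, f x = f a + f b + f c := by
  rw [sum_insert (by simp [hab, hac]), sum_pair hbc, add_assoc]

end Finset

namespace ZeroSumPartition

variable (s l : ℕ)

def blockA (i : ℕ) : Finset ℕ := {i, l + s + i, 2 * s + 6 * l - (l + s + 2 * i) + 1}

def blockB (i : ℕ) : Finset ℕ := {l + i, 2 * s + 6 * l - l - i + 1}

def blockC (i : ℕ) : Finset ℕ :=
  {2 * s + 6 * l - i + 1, s + 3 * l + 1 - i, 2 * s + 6 * l - (s + 3 * l + 1 - 2 * i) + 1}

variable {s l}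

theorem pairwiseDisjoint_blockA :
    ((Finset.Icc 1 l : Finset ℕ) : Set ℕ).PairwiseDisjoint (blockA s l) := by
  intro i hi j hj hij
  simp only [Finset.coe_Icc, Set.mem_Icc] at hi hj
  simp only [Function.onFun, blockA, Finset.disjoint_left, Finset.mem_insert,
    Finset.mem_singleton]
  omega

theorem pairwiseDisjoint_blockB :
    ((Finset.Icc 1 s : Finset ℕ) : Set ℕ).PairwiseDisjoint (blockB s l) := by
  intro i hi j hj hij
  simp only [Finset.coe_Icc, Set.mem_Icc] at hi hj
  simp only [Function.onFun, blockB, Finset.disjoint_left, Finset.mem_insert,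
    Finset.mem_singleton]
  omega

theorem pairwiseDisjoint_blockC :
    ((Finset.Icc 1 l : Finset ℕ) : Set ℕ).PairwiseDisjoint (blockC s l) := by
  intro i hi j hj hij
  simp only [Finset.coe_Icc, Set.mem_Icc] at hi hj
  simp only [Function.onFun, blockC, Finset.disjoint_left, Finset.mem_insert,
    Finset.mem_singleton]
  omega

theorem disjoint_blockA_blockB {i j : ℕ} (hi : i ∈ Finset.Icc 1 l) (hj : j ∈ Finset.Icc 1 s) :
    Disjoint (blockA s l i) (blockB s l j) := by
  simp only [Finset.mem_Icc] at hi hj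
  simp only [blockA, blockB, Finset.disjoint_left, Finset.mem_insert, Finset.mem_singleton]
  omega

theorem disjoint_blockA_blockC {i j : ℕ} (hi : i ∈ Finset.Icc 1 l) (hj : j ∈ Finset.Icc 1 l) :
    Disjoint (blockA s l i) (blockC s l j) := by
  simp only [Finset.mem_Icc] at hi hj
  simp only [blockA, blockC, Finset.disjoint_left, Finset.mem_insert, Finset.mem_singleton]
  omega

theorem disjoint_blockB_blockC {i j : ℕ} (hi : i ∈ Finset.Icc 1 s) (hj : j ∈ Finset.Icc 1 l) :
    Disjoint (blockB s l i) (blockC s l j) := by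
  simp only [Finset.mem_Icc] at hi hj
  simp only [blockB, blockC, Finset.disjoint_left, Finset.mem_insert, Finset.mem_singleton]
  omega

theorem exists_block_mem {x : ℕ} (hx : x ∈ Finset.Icc 1 (2 * s + 6 * l)) :
    (∃ i ∈ Finset.Icc 1 l, x ∈ blockA s l i) ∨ (∃ i ∈ Finset.Icc 1 s, x ∈ blockB s l i) ∨
      ∃ i ∈ Finset.Icc 1 l, x ∈ blockC s l i := by
  simp only [Finset.mem_Icc, blockA, blockB, blockC, Finset.mem_insert,
    Finset.mem_singleton] at hx ⊢
  by_cases h1 : x ≤ l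
  · exact .inl ⟨x, by omega, by omega⟩
  by_cases h2 : x ≤ l + s
  · exact .inr (.inl ⟨x - l, by omega, by omega⟩)
  by_cases h3 : x ≤ s + 2 * l
  · exact .inl ⟨x - l - s, by omega, by omega⟩
  by_cases h4 : x ≤ s + 3 * l
  · exact .inr (.inr ⟨s + 3 * l + 1 - x, by omega, by omega⟩)
  by_cases h5 : x ≤ s + 5 * l
  · by_cases heven : (x - s - 3 * l) % 2 = 0
    · exact .inr (.inr ⟨(x - s - 3 * l) / 2, by omega, by omega⟩)
    · exact .inl ⟨(s + 5 * l + 1 - x) / 2, by omega, by omega⟩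
  by_cases h6 : x ≤ 2 * s + 5 * l
  · exact .inr (.inl ⟨2 * s + 5 * l + 1 - x, by omega, by omega⟩)
  · exact .inr (.inr ⟨2 * s + 6 * l + 1 - x, by omega, by omega⟩)

theorem biUnion_blocks_eq_Icc :
    (Finset.Icc 1 l).biUnion (blockA s l) ∪ (Finset.Icc 1 s).biUnion (blockB s l) ∪
      (Finset.Icc 1 l).biUnion (blockC s l) = Finset.Icc 1 (2 * s + 6 * l) := by
  ext x
  refine ⟨fun hx => ?_, fun hx => ?_⟩
  · simp only [Finset.mem_union, Finset.mem_biUnion, Finset.mem_Icc, blockA, blockB, blockC,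
      Finset.mem_insert, Finset.mem_singleton] at hx ⊢
    rcases hx with (⟨i, hi, hxi⟩ | ⟨i, hi, hxi⟩) | ⟨i, hi, hxi⟩ <;> omega
  · simpa only [Finset.mem_union, Finset.mem_biUnion, or_assoc] using exists_block_mem hx

theorem card_blockA_and_sum {i : ℕ} (hi : i ∈ Finset.Icc 1 l) :
    (blockA s l i).card = 3 ∧ ∑ a ∈ blockA s l i, a = 2 * s + 6 * l + 1 := by
  rw [Finset.mem_Icc] at hi
  have hab : i ≠ l + s + i := by omega
  have hac : i ≠ 2 * s + 6 * l - (l + s + 2 * i) + 1 := by omega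
  have hbc : l + s + i ≠ 2 * s + 6 * l - (l + s + 2 * i) + 1 := by omega
  refine ⟨Finset.card_triple_eq_three_iff.mpr ⟨hab, hac, hbc⟩, ?_⟩
  rw [blockA, Finset.sum_triple_s1 hab hac hbc]
  omega

theorem card_blockB_and_sum {i : ℕ} (hi : i ∈ Finset.Icc 1 s) :
    (blockB s l i).card = 2 ∧ ∑ a ∈ blockB s l i, a = 2 * s + 6 * l + 1 := by
  rw [Finset.mem_Icc] at hi
  have hab : l + i ≠ 2 * s + 6 * l - l - i + 1 := by omega
  refine ⟨Finset.card_pair_eq_two_iff.mpr hab, ?_⟩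
  rw [blockB, Finset.sum_pair hab]
  omega

theorem card_blockC_and_sum {i : ℕ} (hi : i ∈ Finset.Icc 1 l) :
    (blockC s l i).card = 3 ∧ ∑ a ∈ blockC s l i, a = 2 * (2 * s + 6 * l + 1) := by
  rw [Finset.mem_Icc] at hi
  have hab : 2 * s + 6 * l - i + 1 ≠ s + 3 * l + 1 - i := by omega
  have hac : 2 * s + 6 * l - i + 1 ≠ 2 * s + 6 * l - (s + 3 * l + 1 - 2 * i) + 1 := by omega
  have hbc : s + 3 * l + 1 - i ≠ 2 * s + 6 * l - (s + 3 * l + 1 - 2 * i) + 1 := by omega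
  refine ⟨Finset.card_triple_eq_three_iff.mpr ⟨hab, hac, hbc⟩, ?_⟩
  rw [blockC, Finset.sum_triple_s1 hab hac hbc]
  omega

end ZeroSumPartition

/-- **Explicit form of the zero-sum partition.**
Let `s, l` be non-negative integers, `k = 2s + 6l`, and for `1 ≤ i ≤ l` define
`A i = {i, l+s+i, k-(l+s+2i)+1}` and `C i = {k-i+1, s+3l+1-i, k-(s+3l+1-2i)+1}`,
and for `1 ≤ i ≤ s` define `B i = {l+i, k-l-i+1}`. Then these `s + 2l` sets are
pairwise disjoint, their union is `{1, …, k}`, each `A i` has exactly 3 elements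
summing to `k+1`, each `B i` has exactly 2 elements summing to `k+1`, and each
`C i` has exactly 3 elements summing to `2(k+1)`. -/
theorem zero_sum_partition_explicit (s l k : ℕ) (hk : k = 2 * s + 6 * l)
    (A B C : ℕ → Finset ℕ)
    (hA : ∀ i, A i = {i, l + s + i, k - (l + s + 2 * i) + 1})
    (hB : ∀ i, B i = {l + i, k - l - i + 1})
    (hC : ∀ i, C i = {k - i + 1, s + 3 * l + 1 - i, k - (s + 3 * l + 1 - 2 * i) + 1}) :
    (∀ i ∈ Finset.Icc 1 l, ∀ j ∈ Finset.Icc 1 l, i ≠ j → Disjoint (A i) (A j)) ∧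
    (∀ i ∈ Finset.Icc 1 s, ∀ j ∈ Finset.Icc 1 s, i ≠ j → Disjoint (B i) (B j)) ∧
    (∀ i ∈ Finset.Icc 1 l, ∀ j ∈ Finset.Icc 1 l, i ≠ j → Disjoint (C i) (C j)) ∧
    (∀ i ∈ Finset.Icc 1 l, ∀ j ∈ Finset.Icc 1 s, Disjoint (A i) (B j)) ∧
    (∀ i ∈ Finset.Icc 1 l, ∀ j ∈ Finset.Icc 1 l, Disjoint (A i) (C j)) ∧
    (∀ i ∈ Finset.Icc 1 s, ∀ j ∈ Finset.Icc 1 l, Disjoint (B i) (C j)) ∧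
    ((Finset.Icc 1 l).biUnion A ∪ (Finset.Icc 1 s).biUnion B ∪
      (Finset.Icc 1 l).biUnion C = Finset.Icc 1 k) ∧
    (∀ i ∈ Finset.Icc 1 l, (A i).card = 3 ∧ (∑ a ∈ A i, a) = k + 1) ∧
    (∀ i ∈ Finset.Icc 1 s, (B i).card = 2 ∧ (∑ a ∈ B i, a) = k + 1) ∧
    (∀ i ∈ Finset.Icc 1 l, (C i).card = 3 ∧ (∑ a ∈ C i, a) = 2 * (k + 1)) := by
  subst hk
  obtain rfl : A = ZeroSumPartition.blockA s l := funext hA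
  obtain rfl : B = ZeroSumPartition.blockB s l := funext hB
  obtain rfl : C = ZeroSumPartition.blockC s l := funext hC
  exact ⟨ZeroSumPartition.pairwiseDisjoint_blockA, ZeroSumPartition.pairwiseDisjoint_blockB,
    ZeroSumPartition.pairwiseDisjoint_blockC,
    fun _ hi _ hj => ZeroSumPartition.disjoint_blockA_blockB hi hj,
    fun _ hi _ hj => ZeroSumPartition.disjoint_blockA_blockC hi hj,
    fun _ hi _ hj => ZeroSumPartition.disjoint_blockB_blockC hi hj,
    ZeroSumPartition.biUnion_blocks_eq_Icc,
    fun _ => ZeroSumPartition.card_blockA_and_sum, fun _ => ZeroSumPartition.card_blockB_and_sum,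
    fun _ => ZeroSumPartition.card_blockC_and_sum⟩
end

section
/- Let T be a finite tree with m ≥ 1 edges and let w be a vertex of T. For each vertex v ≠ w, let e^v denote the unique edge incident to v that lies on the (unique) path in T from v to w. Suppose f is a bijection from the edge set of T onto {1, 2, ..., m} such that φ_f(v) ≡ f(e^v) (mod m+1) for every vertex v ≠ w, and φ_f(w) ≡ 0 (mod m+1). Then f is an antimagic labeling of T, i.e., the vertex-sums φ_f(u) are pairwise distinct over all vertices u of T. -/
/-!
Reduce modulo `m + 1`: the root `w` has residue `0`, while every other vertex `v` has residue
`f(e^v) ∈ [1, m]`. So it suffices that `v ↦ e^v` is injective away from the root. If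
`e^a = e^b` with `a ≠ b`, this edge is `ab`; the path from `a` to `w` must start with it, so its
remainder is a path from `b` to `w` avoiding `a`, which must nevertheless contain `e^b = ab ∋ a`.
-/

/-- The vertex-sum of a vertex `u` under an edge labeling `f`:
the sum of the labels of the edges incident to `u`. -/
def vertexSum {V : Type*} [Fintype V] [DecidableEq V] (G : SimpleGraph V)
    [DecidableRel G.Adj] (f : Sym2 V → ℕ) (u : V) : ℕ :=
  ∑ e ∈ G.incidenceFinset u, f e

/-- A graph `G` with `m` edges is antimagic if there is a bijection from its edge
set onto `{1, …, m}` whose vertex-sums are pairwise distinct over all vertices. -/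
def IsAntimagic {V : Type*} [Fintype V] [DecidableEq V] (G : SimpleGraph V)
    [DecidableRel G.Adj] : Prop :=
  ∃ f : Sym2 V → ℕ,
    Set.BijOn f ↑G.edgeFinset ↑(Finset.Icc 1 G.edgeFinset.card) ∧
    Function.Injective (vertexSum G f)

namespace SimpleGraph

variable {V : Type*} {G : SimpleGraph V}

theorem Walk.IsPath.exists_isPath_avoiding_of_start_edge_mem {a b w : V} {p : G.Walk a w}
    (hp : p.IsPath) (hab : s(a, b) ∈ p.edges) :
    ∃ q : G.Walk b w, q.IsPath ∧ a ∉ q.support := by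
  cases p with
  | nil => simp at hab
  | cons hac q =>
    rw [cons_isPath_iff] at hp
    rw [edges_cons, List.mem_cons] at hab
    rcases hab with hfirst | htail
    · obtain rfl := Sym2.congr_right.mp hfirst
      exact ⟨q, hp⟩
    · exact (hp.2 (q.fst_mem_support_of_mem_edges htail)).elim

section EdgeTowardRoot

variable {w : V} {e : V → Sym2 V}
  (he : ∀ v, v ≠ w → ∀ p : G.Path v w, e v ∈ p.val.edges ∧ v ∈ e v)
include he

theorem mem_edgeSet_of_edge_toward_root {v : V} (hv : v ≠ w) (hvw : G.Reachable v w) :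
    e v ∈ G.edgeSet :=
  let ⟨p, hp⟩ := hvw.exists_isPath
  p.edges_subset_edgeSet (he v hv ⟨p, hp⟩).1

theorem injOn_edge_toward_root (hG : G.Preconnected) : Set.InjOn e {w}ᶜ := by
  intro a ha b hb heq
  by_contra hne
  obtain ⟨p, hp⟩ := hG.exists_isPath a w
  obtain ⟨hpa, hea⟩ := he a ha ⟨p, hp⟩
  obtain ⟨p', hp'⟩ := hG.exists_isPath b w
  have heab : e a = s(a, b) := (Sym2.mem_and_mem_iff hne).1 ⟨hea, heq ▸ (he b hb ⟨p', hp'⟩).2⟩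
  obtain ⟨q, hq, haq⟩ := hp.exists_isPath_avoiding_of_start_edge_mem (heab ▸ hpa)
  have hqa : s(a, b) ∈ q.edges := by
    rw [← heab, heq]
    exact (he b hb ⟨q, hq⟩).1
  exact haq (q.fst_mem_support_of_mem_edges hqa)

end EdgeTowardRoot

end SimpleGraph

open SimpleGraph

theorem zero_sum_labeling_antimagic_general {V : Type*} [Fintype V] [DecidableEq V]
    (G : SimpleGraph V) [DecidableRel G.Adj] (hT : G.IsTree)
    (m : ℕ)
    (w : V) (ePath : V → Sym2 V)
    (hePath : ∀ v : V, v ≠ w → ∀ p : G.Path v w, ePath v ∈ p.val.edges ∧ v ∈ ePath v)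
    (f : Sym2 V → ℕ) (hf : Set.BijOn f ↑G.edgeFinset ↑(Finset.Icc 1 m))
    (hsum : ∀ v : V, v ≠ w → vertexSum G f v % (m + 1) = f (ePath v) % (m + 1))
    (hw : vertexSum G f w % (m + 1) = 0) :
    Function.Injective (vertexSum G f) := by
  have hG := hT.connected.preconnected
  have hedge : Set.MapsTo ePath {w}ᶜ G.edgeFinset := fun v hv => by
    simpa using mem_edgeSet_of_edge_toward_root hePath hv (hG v w)
  have hlabel (v : V) (hv : v ≠ w) : f (ePath v) ∈ Finset.Icc 1 m := hf.mapsTo (hedge hv)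
  have hres : Set.EqOn (f ∘ ePath) (fun v => vertexSum G f v % (m + 1)) {w}ᶜ := fun v hv => by
    have hlt : f (ePath v) < m + 1 := Nat.lt_succ_of_le (Finset.mem_Icc.1 (hlabel v hv)).2
    simp only [Function.comp_apply, hsum v hv, Nat.mod_eq_of_lt hlt]
  refine Function.Injective.of_comp (f := (· % (m + 1))) ?_
  rw [← Set.injOn_univ, ← Set.union_compl_self {w}, Set.injOn_union disjoint_compl_right]
  refine ⟨Set.injOn_singleton _ _,
    (hf.injOn.comp (injOn_edge_toward_root hePath hG) hedge).congr hres, ?_⟩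
  rintro _ rfl v hv hvw
  have hpos : 1 ≤ f (ePath v) := (Finset.mem_Icc.1 (hlabel v hv)).1
  simp only [Function.comp_apply, hw, ← hres hv] at hvw
  omega

/-- **Zero-sum labelings are antimagic.** Let `T` be a finite tree with `m ≥ 1`
edges, rooted at a vertex `w`. For each vertex `v ≠ w`, let `ePath v` be the unique
edge incident to `v` lying on the unique path from `v` to `w`. If `f` is a bijection
from the edge set onto `{1, …, m}` such that `φ_f(v) ≡ f(ePath v) (mod m + 1)` for
all `v ≠ w` and `φ_f(w) ≡ 0 (mod m + 1)`, then the vertex-sums of `f` are pairwise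
distinct, i.e. `f` is an antimagic labeling of `T`. -/
theorem zero_sum_labeling_antimagic {V : Type*} [Fintype V] [DecidableEq V]
    (G : SimpleGraph V) [DecidableRel G.Adj] (hT : G.IsTree)
    (m : ℕ) (hm : m = G.edgeFinset.card) (hm1 : 1 ≤ m)
    (w : V) (ePath : V → Sym2 V)
    (hePath : ∀ v : V, v ≠ w → ∀ p : G.Path v w, ePath v ∈ p.val.edges ∧ v ∈ ePath v)
    (f : Sym2 V → ℕ) (hf : Set.BijOn f ↑G.edgeFinset ↑(Finset.Icc 1 m))
    (hsum : ∀ v : V, v ≠ w → vertexSum G f v % (m + 1) = f (ePath v) % (m + 1))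
    (hw : vertexSum G f w % (m + 1) = 0) :
    Function.Injective (vertexSum G f) :=
  zero_sum_labeling_antimagic_general G hT m w ePath hePath f hf hsum hw
end

section
/- Let k be an even positive integer and let k = r_1 + r_2 + ... + r_t where r_i ≥ 2 for every i with 1 ≤ i ≤ t. Then the set {1, 2, ..., k} can be partitioned into pairwise disjoint subsets D_1, D_2, ..., D_t whose union is {1, ..., k}, such that for every i with 1 ≤ i ≤ t, |D_i| = r_i and the sum of the elements of D_i is congruent to 0 modulo k+1. -/
/-!
Write `k = 2s`. The mirror pairs `{j, 2s + 1 - j}`, `1 ≤ j ≤ s`, partition `[1, k]` into blocks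
of sum `k + 1`, so every even part can be taken to be a union of mirror pairs. Since `k` is even,
the number of odd parts is even, say `2n`, and `3n ≤ s`; each odd part is one zero-sum triple plus
mirror pairs. The `2n` triples come from a Skolem or hooked Skolem sequence of order `n`: if `d`
sits at positions `a d` and `a d + d`, put `x = d`, `y = n + a d` and `z = x + y`. Then
`{x, y, -z}` and `{-x, -y, z}` are zero-sum triples modulo `k + 1` that together fill the mirror
pairs of `x`, `y` and `z`, and these `3n` pairs are distinct because the positions are. The
remaining `s - 3n` mirror pairs are distributed among the parts.
-/

open Finset

namespace Finset

variable {ι α β γ : Type*}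

theorem exists_partition_of_card_eq_sum [DecidableEq α] (I : Finset ι) (q : ι → ℕ)
    (F : Finset α) (hF : #F = ∑ i ∈ I, q i) :
    ∃ S : ι → Finset α, (∀ i ∈ I, #(S i) = q i) ∧ (I : Set ι).PairwiseDisjoint S ∧
      I.biUnion S = F := by
  classical
  induction I using Finset.induction_on generalizing F with
  | empty => exact ⟨fun _ => ∅, by simp, by simp, (card_eq_zero.1 (by simpa using hF)).symm⟩
  | insert a I haI ih =>
    rw [sum_insert haI] at hF
    obtain ⟨T, hTF, hT⟩ := exists_subset_card_eq (s := F) (n := q a) (by omega)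
    obtain ⟨S, hS, hSdisj, hSF⟩ := ih (F \ T) (by rw [card_sdiff_of_subset hTF]; omega)
    have hST : ∀ i ∈ I, Disjoint (S i) T := fun i hi =>
      disjoint_sdiff_self_left.mono_left (hSF ▸ subset_biUnion_of_mem S hi)
    refine ⟨Function.update S a T, ?_, ?_, ?_⟩
    · intro i hi
      rcases mem_insert.1 hi with rfl | hi
      · simpa using hT
      · simpa [Function.update_of_ne (ne_of_mem_of_not_mem hi haI)] using hS i hi
    · rw [coe_insert]
      refine (hSdisj.mono_on fun i hi => ?_).insert fun i hi hia => ?_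
      · simp [Function.update_of_ne (ne_of_mem_of_not_mem hi haI)]
      · simpa [Function.onFun, Function.update_of_ne hia.symm] using (hST i hi).symm
    · rw [biUnion_insert, Function.update_self, biUnion_congr rfl fun i hi => by
        rw [Function.update_of_ne (ne_of_mem_of_not_mem hi haI)], hSF,
        union_sdiff_of_subset hTF]

theorem disjoint_of_mapsTo {f : α → β} {A B : Finset α} {X Y : Finset β}
    (hA : ∀ x ∈ A, f x ∈ X) (hB : ∀ x ∈ B, f x ∈ Y) (hXY : Disjoint X Y) : Disjoint A B :=
  disjoint_left.2 fun x hxA hxB => disjoint_left.1 hXY (hA x hxA) (hB x hxB)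

theorem disjoint_disjSum {s₁ s₂ : Finset α} {t₁ t₂ : Finset β} :
    Disjoint (s₁.disjSum t₁) (s₂.disjSum t₂) ↔ Disjoint s₁ s₂ ∧ Disjoint t₁ t₂ := by
  simp only [disjoint_left, Sum.forall, inl_mem_disjSum, inr_mem_disjSum]

theorem exists_disjSum_partition [DecidableEq α] [DecidableEq β] (I : Finset ι)
    (p q : ι → ℕ) (K₁ : Finset α) (K₂ : Finset β) (h₁ : #K₁ = ∑ i ∈ I, p i)
    (h₂ : #K₂ = ∑ i ∈ I, q i) :
    ∃ (T : ι → Finset α) (P : ι → Finset β), (∀ i ∈ I, #(T i) = p i ∧ #(P i) = q i) ∧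
      (I : Set ι).PairwiseDisjoint (fun i => (T i).disjSum (P i)) ∧
      I.biUnion (fun i => (T i).disjSum (P i)) = K₁.disjSum K₂ := by
  obtain ⟨T, hT, hTdisj, hTK⟩ := exists_partition_of_card_eq_sum I p K₁ h₁
  obtain ⟨P, hP, hPdisj, hPK⟩ := exists_partition_of_card_eq_sum I q K₂ h₂
  refine ⟨T, P, fun i hi => ⟨hT i hi, hP i hi⟩,
    fun i hi j hj hij => disjoint_disjSum.2 ⟨hTdisj hi hj hij, hPdisj hi hj hij⟩, ?_⟩
  ext (x | x) <;> simp [← hTK, ← hPK]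

theorem pairwiseDisjoint_biUnion_biUnion [DecidableEq α] [DecidableEq γ] {I : Finset ι}
    {S : ι → Finset α} {A : α → Finset γ} (hS : (I : Set ι).PairwiseDisjoint S)
    (hA : (I.biUnion S : Set α).PairwiseDisjoint A) :
    (I : Set ι).PairwiseDisjoint fun i => (S i).biUnion A := by
  intro i hi j hj hij
  rw [Function.onFun, disjoint_biUnion_left]
  intro κ hκ
  rw [disjoint_biUnion_right]
  intro κ' hκ'
  exact hA (by simpa using ⟨i, hi, hκ⟩) (by simpa using ⟨j, hj, hκ'⟩)
    fun h => disjoint_left.1 (hS hi hj hij) hκ (h ▸ hκ')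

end Finset

namespace ZeroSumPartition

theorem exists_zero_sum_partition_of_atoms {ι α β : Type*} [DecidableEq α] [DecidableEq β]
    (I : Finset ι) (r : ι → ℕ) (hr : ∀ i ∈ I, 2 ≤ r i) (m : ℕ) (K₁ : Finset α)
    (K₂ : Finset β) (A : α ⊕ β → Finset ℕ)
    (hA : (K₁.disjSum K₂ : Set (α ⊕ β)).PairwiseDisjoint A)
    (hA₁ : ∀ κ ∈ K₁, #(A (.inl κ)) = 3) (hA₂ : ∀ κ ∈ K₂, #(A (.inr κ)) = 2)
    (hAm : ∀ κ ∈ K₁.disjSum K₂, m ∣ ∑ x ∈ A κ, x)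
    (hK₁ : #K₁ = ∑ i ∈ I, r i % 2) (hK₂ : #K₂ = ∑ i ∈ I, (r i / 2 - r i % 2)) :
    ∃ D : ι → Finset ℕ, (I : Set ι).PairwiseDisjoint D ∧
      I.biUnion D = (K₁.disjSum K₂).biUnion A ∧ ∀ i ∈ I, #(D i) = r i ∧ m ∣ ∑ x ∈ D i, x := by
  obtain ⟨T, P, hTP, hdisj, hunion⟩ := exists_disjSum_partition I _ _ K₁ K₂ hK₁ hK₂
  refine ⟨fun i => ((T i).disjSum (P i)).biUnion A,
    pairwiseDisjoint_biUnion_biUnion hdisj (hunion ▸ hA), by rw [← biUnion_biUnion, hunion],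
    fun i hi => ?_⟩
  have hsub : (T i).disjSum (P i) ⊆ K₁.disjSum K₂ :=
    hunion ▸ subset_biUnion_of_mem (fun i => (T i).disjSum (P i)) hi
  have hAi := hA.subset (coe_subset.2 hsub)
  refine ⟨?_, by rw [sum_biUnion hAi]; exact dvd_sum fun κ hκ => hAm κ (hsub hκ)⟩
  have hT : ∀ κ ∈ T i, #(A (.inl κ)) = 3 := fun κ hκ =>
    hA₁ κ (inl_mem_disjSum.1 (hsub (inl_mem_disjSum.2 hκ)))
  have hP : ∀ κ ∈ P i, #(A (.inr κ)) = 2 := fun κ hκ =>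
    hA₂ κ (inr_mem_disjSum.1 (hsub (inr_mem_disjSum.2 hκ)))
  rw [card_biUnion hAi, sum_disjSum, sum_congr rfl hT, sum_congr rfl hP, sum_const, sum_const,
    (hTP i hi).1, (hTP i hi).2, smul_eq_mul, smul_eq_mul]
  have := hr i hi
  omega

/-- `a d` and `a d + d` (`1 ≤ d ≤ n`) are the two positions of `d` in a Skolem sequence of order
`n` (positions `1, …, 2n`) or in a hooked one (positions `1, …, 2n + 1` except `2n`). -/
structure IsSkolemOrHooked (n : ℕ) (a : ℕ → ℕ) : Prop where
  one_le : ∀ d ∈ Icc 1 n, 1 ≤ a d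
  add_le : ∀ d ∈ Icc 1 n, a d + d ≤ 2 * n + 1
  ne : ∀ d ∈ Icc 1 n, ∀ d' ∈ Icc 1 n, d ≠ d' →
    a d ≠ a d' ∧ a d ≠ a d' + d' ∧ a d + d ≠ a d' + d'
  hook : ∀ d ∈ Icc 1 n, ∀ d' ∈ Icc 1 n, a d + d = 2 * n + 1 → a d' ≠ 2 * n ∧ a d' + d' ≠ 2 * n

theorem IsSkolemOrHooked.bounds {n : ℕ} {a : ℕ → ℕ} {d : ℕ} (ha : IsSkolemOrHooked n a)
    (hd : d ∈ Icc 1 n) :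
    1 ≤ d ∧ d ≤ n ∧ 1 ≤ a d ∧ a d + d ≤ 2 * n + 1 ∧ (a d + d = 2 * n + 1 → a d ≠ 2 * n) :=
  ⟨(mem_Icc.1 hd).1, (mem_Icc.1 hd).2, ha.one_le d hd, ha.add_le d hd,
    fun h => (ha.hook d hd d hd h).1⟩

def skolem₀ (m d : ℕ) : ℕ :=
  if d = 1 then m
  else if d % 2 = 0 then 6 * m - d / 2
  else if d = 4 * m - 1 then 2 * m + 1
  else if d = 2 * m - 1 then 2 * m
  else if 2 * m + 1 ≤ d then (4 * m - 1 - d) / 2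
  else m + (2 * m + 1 - d) / 2

theorem isSkolemOrHooked_skolem₀ (m : ℕ) : IsSkolemOrHooked (4 * m) (skolem₀ m) := by
  constructor <;> intros <;> simp only [mem_Icc] at * <;> unfold skolem₀ at * <;>
    split_ifs at * <;> omega

def skolem₁ (m d : ℕ) : ℕ :=
  if d = 1 then m + 1
  else if d % 2 = 0 then 6 * m + 2 - d / 2
  else if d = 4 * m + 1 then 2 * m + 1
  else if d = 2 * m + 1 then m
  else if d = 2 * m - 1 then 2 * m + 2
  else if 2 * m + 3 ≤ d then (4 * m + 1 - d) / 2
  else m + 2 + (2 * m - 1 - d) / 2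

set_option maxHeartbeats 2000000 in
theorem isSkolemOrHooked_skolem₁ {m : ℕ} (hm : m ≠ 1) :
    IsSkolemOrHooked (4 * m + 1) (skolem₁ m) := by
  constructor <;> intros <;> simp only [mem_Icc] at * <;> unfold skolem₁ at * <;>
    split_ifs at * <;> omega

def hookedSkolem₂ (m d : ℕ) : ℕ :=
  if d = 1 then 7 * m + 3
  else if d = 4 * m + 2 then 4 * m + 3
  else if d % 2 = 0 then 2 * m + 1 - d / 2
  else if d = 4 * m + 1 then 2 * m + 1
  else if d = 2 * m + 1 then 4 * m + 2
  else if 2 * m + 3 ≤ d then 4 * m + 3 + (4 * m + 1 - d) / 2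
  else 5 * m + 2 + (2 * m + 1 - d) / 2

set_option maxHeartbeats 2000000 in
theorem isSkolemOrHooked_hookedSkolem₂ {m : ℕ} (hm : m ≠ 0) :
    IsSkolemOrHooked (4 * m + 2) (hookedSkolem₂ m) := by
  constructor <;> intros <;> simp only [mem_Icc] at * <;> unfold hookedSkolem₂ at * <;>
    split_ifs at * <;> omega

def hookedSkolem₃ (m d : ℕ) : ℕ :=
  if d = 1 then 7 * m + 4
  else if d = 4 * m + 3 then 4 * m + 4
  else if d % 2 = 0 then 2 * m + 2 - d / 2
  else if d = 4 * m + 1 then 2 * m + 2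
  else if d = 2 * m + 1 then 6 * m + 4
  else if 2 * m + 3 ≤ d then 4 * m + 4 + (4 * m + 1 - d) / 2
  else 5 * m + 3 + (2 * m + 1 - d) / 2

set_option maxHeartbeats 2000000 in
theorem isSkolemOrHooked_hookedSkolem₃ {m : ℕ} (hm : m ≠ 0) :
    IsSkolemOrHooked (4 * m + 3) (hookedSkolem₃ m) := by
  constructor <;> intros <;> simp only [mem_Icc] at * <;> unfold hookedSkolem₃ at * <;>
    split_ifs at * <;> omega

def skolem (n : ℕ) : ℕ → ℕ :=
  if n = 2 then fun d => [1, 3].getD (d - 1) 0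
  else if n = 3 then fun d => [1, 3, 4].getD (d - 1) 0
  else if n = 5 then fun d => [2, 6, 7, 1, 4].getD (d - 1) 0
  else if n % 4 = 0 then skolem₀ (n / 4)
  else if n % 4 = 1 then skolem₁ (n / 4)
  else if n % 4 = 2 then hookedSkolem₂ (n / 4)
  else hookedSkolem₃ (n / 4)

theorem isSkolemOrHooked_skolem (n : ℕ) : IsSkolemOrHooked n (skolem n) := by
  unfold skolem
  split_ifs with h₂ h₃ h₅
  · subst h₂; exact ⟨by decide, by decide, by decide, by decide⟩
  · subst h₃; exact ⟨by decide, by decide, by decide, by decide⟩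
  · subst h₅; exact ⟨by decide, by decide, by decide, by decide⟩
  · simpa [show 4 * (n / 4) = n by omega] using isSkolemOrHooked_skolem₀ (n / 4)
  · simpa [show 4 * (n / 4) + 1 = n by omega] using
      isSkolemOrHooked_skolem₁ (m := n / 4) (by omega)
  · simpa [show 4 * (n / 4) + 2 = n by omega] using
      isSkolemOrHooked_hookedSkolem₂ (m := n / 4) (by omega)
  · simpa [show 4 * (n / 4) + 3 = n by omega] using
      isSkolemOrHooked_hookedSkolem₃ (m := n / 4) (by omega)

section Construction

variable (s n : ℕ) (a : ℕ → ℕ)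

def mirrorPair (j : ℕ) : Finset ℕ := {j, 2 * s + 1 - j}

/-- For `x ∈ [1, 2s]`, the `j ≤ s` with `x ∈ mirrorPair s j`. -/
def pairIndex (x : ℕ) : ℕ := min x (2 * s + 1 - x)

/-- `{x, y, -z}` and `{-x, -y, z}` modulo `2s + 1`, for `x = d`, `y = n + a d`, `z = x + y`. -/
def triple (d : ℕ) : Bool → Finset ℕ
  | false => {d, n + a d, 2 * s + 1 - (n + a d + d)}
  | true => {2 * s + 1 - d, 2 * s + 1 - (n + a d), n + a d + d}

def usedPairIndices (d : ℕ) : Finset ℕ := {d, n + a d, pairIndex s (n + a d + d)}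

def freePairIndices : Finset ℕ := Icc 1 s \ (Icc 1 n).biUnion (usedPairIndices s n a)

def atomIndices : Finset ((ℕ × Bool) ⊕ ℕ) := (Icc 1 n ×ˢ univ).disjSum (freePairIndices s n a)

def atom : (ℕ × Bool) ⊕ ℕ → Finset ℕ := Sum.elim (fun p => triple s n a p.1 p.2) (mirrorPair s)

end Construction

variable {s n : ℕ} {a : ℕ → ℕ} {d d' j x : ℕ}

theorem card_mirrorPair (s j : ℕ) : #(mirrorPair s j) = 2 :=
  Finset.card_pair (by omega)

theorem sum_mirrorPair (hj : j ≤ 2 * s + 1) : ∑ x ∈ mirrorPair s j, x = 2 * s + 1 := by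
  rw [mirrorPair, Finset.sum_pair (by omega)]
  omega

theorem mirrorPair_subset (hj : j ∈ Icc 1 s) : mirrorPair s j ⊆ Icc 1 (2 * s) := by
  rw [mem_Icc] at hj
  intro x hx
  simp only [mirrorPair, mem_insert, mem_singleton] at hx
  rw [mem_Icc]
  omega

theorem pairIndex_of_mem_mirrorPair (hj : j ≤ s) (hx : x ∈ mirrorPair s j) :
    pairIndex s x = j := by
  simp only [mirrorPair, mem_insert, mem_singleton] at hx
  rw [pairIndex]
  omega

theorem triple_subset (hs : 3 * n ≤ s) (ha : IsSkolemOrHooked n a) (hd : d ∈ Icc 1 n)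
    (b : Bool) : triple s n a d b ⊆ Icc 1 (2 * s) := by
  obtain ⟨h₁, h₂, h₃, h₄, h₅⟩ := ha.bounds hd
  intro x hx
  rw [mem_Icc]
  cases b <;> simp only [triple, mem_insert, mem_singleton] at hx <;> omega

theorem card_triple (hs : 3 * n ≤ s) (ha : IsSkolemOrHooked n a) (hd : d ∈ Icc 1 n)
    (b : Bool) : #(triple s n a d b) = 3 := by
  obtain ⟨h₁, h₂, h₃, h₄, h₅⟩ := ha.bounds hd
  rw [card_eq_three]
  cases b
  · exact ⟨_, _, _, by omega, by omega, by omega, rfl⟩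
  · exact ⟨_, _, _, by omega, by omega, by omega, rfl⟩

theorem dvd_sum_triple (hs : 3 * n ≤ s) (ha : IsSkolemOrHooked n a) (hd : d ∈ Icc 1 n)
    (b : Bool) : 2 * s + 1 ∣ ∑ x ∈ triple s n a d b, x := by
  obtain ⟨h₁, h₂, h₃, h₄, h₅⟩ := ha.bounds hd
  cases b <;>
    rw [triple, sum_insert (by simp only [mem_insert, mem_singleton]; omega),
      sum_insert (by simp only [mem_singleton]; omega), sum_singleton]
  exacts [⟨1, by omega⟩, ⟨2, by omega⟩]

theorem disjoint_triple_false_true (hs : 3 * n ≤ s) (ha : IsSkolemOrHooked n a)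
    (hd : d ∈ Icc 1 n) : Disjoint (triple s n a d false) (triple s n a d true) := by
  obtain ⟨h₁, h₂, h₃, h₄, h₅⟩ := ha.bounds hd
  simp only [triple, disjoint_insert_left, disjoint_insert_right, disjoint_singleton,
    mem_insert, mem_singleton]
  omega

theorem pairIndex_mem_usedPairIndices (hs : 3 * n ≤ s) (ha : IsSkolemOrHooked n a)
    (hd : d ∈ Icc 1 n) {b : Bool} (hx : x ∈ triple s n a d b) :
    pairIndex s x ∈ usedPairIndices s n a d := by
  obtain ⟨h₁, h₂, h₃, h₄, h₅⟩ := ha.bounds hd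
  simp only [usedPairIndices, pairIndex, mem_insert, mem_singleton]
  cases b <;> simp only [triple, mem_insert, mem_singleton] at hx <;> omega

theorem usedPairIndices_subset (hs : 3 * n ≤ s) (ha : IsSkolemOrHooked n a)
    (hd : d ∈ Icc 1 n) : usedPairIndices s n a d ⊆ Icc 1 s := by
  obtain ⟨h₁, h₂, h₃, h₄, h₅⟩ := ha.bounds hd
  intro x hx
  simp only [usedPairIndices, pairIndex, mem_insert, mem_singleton] at hx
  rw [mem_Icc]
  omega

theorem card_usedPairIndices (hs : 3 * n ≤ s) (ha : IsSkolemOrHooked n a)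
    (hd : d ∈ Icc 1 n) : #(usedPairIndices s n a d) = 3 := by
  obtain ⟨h₁, h₂, h₃, h₄, h₅⟩ := ha.bounds hd
  rw [card_eq_three]
  exact ⟨_, _, _, by omega, by simp only [pairIndex]; omega, by simp only [pairIndex]; omega, rfl⟩

theorem disjoint_usedPairIndices (hs : 3 * n ≤ s) (ha : IsSkolemOrHooked n a)
    (hd : d ∈ Icc 1 n) (hd' : d' ∈ Icc 1 n) (hne : d ≠ d') :
    Disjoint (usedPairIndices s n a d) (usedPairIndices s n a d') := by
  obtain ⟨h₁, h₂, h₃, h₄, h₅⟩ := ha.bounds hd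
  obtain ⟨h₁', h₂', h₃', h₄', h₅'⟩ := ha.bounds hd'
  have := ha.ne d hd d' hd' hne
  have := ha.ne d' hd' d hd hne.symm
  have := ha.hook d hd d' hd'
  have := ha.hook d' hd' d hd
  simp only [usedPairIndices, pairIndex, disjoint_insert_left, disjoint_insert_right,
    disjoint_singleton, mem_insert, mem_singleton]
  omega

theorem card_freePairIndices (hs : 3 * n ≤ s) (ha : IsSkolemOrHooked n a) :
    #(freePairIndices s n a) = s - 3 * n := by
  have hU : ((Icc 1 n : Set ℕ)).PairwiseDisjoint (usedPairIndices s n a) :=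
    fun d hd d' hd' hne => disjoint_usedPairIndices hs ha hd hd' hne
  rw [freePairIndices, card_sdiff_of_subset (biUnion_subset.2 fun d hd =>
      usedPairIndices_subset hs ha hd), card_biUnion hU,
    sum_congr rfl fun d hd => card_usedPairIndices hs ha hd]
  simp [mul_comm]

theorem pairwiseDisjoint_atom (hs : 3 * n ≤ s) (ha : IsSkolemOrHooked n a) :
    (atomIndices s n a : Set ((ℕ × Bool) ⊕ ℕ)).PairwiseDisjoint (atom s n a) := by
  have hpair : ∀ {j}, j ∈ freePairIndices s n a →
      ∀ x ∈ mirrorPair s j, pairIndex s x ∈ ({j} : Finset ℕ) :=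
    fun hj x hx => mem_singleton.2 (pairIndex_of_mem_mirrorPair (mem_Icc.1 (mem_sdiff.1 hj).1).2 hx)
  have hfree : ∀ {j}, j ∈ freePairIndices s n a → ∀ d ∈ Icc 1 n,
      Disjoint (usedPairIndices s n a d) {j} := fun hj d hd =>
    disjoint_singleton_right.2 fun h => (mem_sdiff.1 hj).2 (mem_biUnion.2 ⟨d, hd, h⟩)
  rintro (⟨d, b⟩ | j) hκ (⟨d', b'⟩ | j') hκ' hne <;>
    simp only [mem_coe, atomIndices, inl_mem_disjSum, inr_mem_disjSum, mem_product, mem_univ,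
      and_true] at hκ hκ' <;>
    simp only [Function.onFun, atom, Sum.elim_inl, Sum.elim_inr]
  · obtain rfl | hdd := eq_or_ne d d'
    · obtain rfl : b' = !b := by cases b <;> cases b' <;> simp_all
      cases b
      exacts [disjoint_triple_false_true hs ha hκ, (disjoint_triple_false_true hs ha hκ).symm]
    · exact disjoint_of_mapsTo (fun x => pairIndex_mem_usedPairIndices hs ha hκ)
        (fun x => pairIndex_mem_usedPairIndices hs ha hκ')
        (disjoint_usedPairIndices hs ha hκ hκ' hdd)
  · exact disjoint_of_mapsTo (fun x => pairIndex_mem_usedPairIndices hs ha hκ) (hpair hκ')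
      (hfree hκ' d hκ)
  · exact disjoint_of_mapsTo (hpair hκ) (fun x => pairIndex_mem_usedPairIndices hs ha hκ')
      (hfree hκ d' hκ').symm
  · exact disjoint_of_mapsTo (hpair hκ) (hpair hκ')
      (disjoint_singleton.2 fun h => hne (congrArg Sum.inr h))

theorem dvd_sum_atom (hs : 3 * n ≤ s) (ha : IsSkolemOrHooked n a) :
    ∀ κ ∈ atomIndices s n a, 2 * s + 1 ∣ ∑ x ∈ atom s n a κ, x := by
  rintro (⟨d, b⟩ | j) hκ <;>
    simp only [atomIndices, inl_mem_disjSum, inr_mem_disjSum, mem_product] at hκ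
  · exact dvd_sum_triple hs ha hκ.1 b
  · rw [atom, Sum.elim_inr, sum_mirrorPair (by have := (mem_Icc.1 (mem_sdiff.1 hκ).1).2; omega)]

theorem biUnion_atom (hs : 3 * n ≤ s) (ha : IsSkolemOrHooked n a) :
    (atomIndices s n a).biUnion (atom s n a) = Icc 1 (2 * s) := by
  refine eq_of_subset_of_card_le (biUnion_subset.2 ?_) ?_
  · rintro (⟨d, b⟩ | j) hκ <;>
      simp only [atomIndices, inl_mem_disjSum, inr_mem_disjSum, mem_product] at hκ
    · exact triple_subset hs ha hκ.1 b
    · exact mirrorPair_subset (mem_sdiff.1 hκ).1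
  · rw [card_biUnion (pairwiseDisjoint_atom hs ha), atomIndices, sum_disjSum]
    simp only [atom, Sum.elim_inl, Sum.elim_inr, card_mirrorPair]
    rw [sum_congr rfl fun p hp => card_triple hs ha (mem_product.1 hp).1 p.2]
    simp only [sum_const, smul_eq_mul, card_product, card_univ, Fintype.card_bool,
      card_freePairIndices hs ha, Nat.card_Icc]
    omega

end ZeroSumPartition

open ZeroSumPartition

theorem zero_sum_partition_sizes_even_general (k t : ℕ) (hke : Even k)
    (r : ℕ → ℕ) (hr : ∀ i ∈ Finset.Icc 1 t, 2 ≤ r i)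
    (hsum : k = ∑ i ∈ Finset.Icc 1 t, r i) :
    ∃ D : ℕ → Finset ℕ,
      (∀ i ∈ Finset.Icc 1 t, ∀ j ∈ Finset.Icc 1 t, i ≠ j → Disjoint (D i) (D j)) ∧
      ((Finset.Icc 1 t).biUnion D = Finset.Icc 1 k) ∧
      (∀ i ∈ Finset.Icc 1 t, (D i).card = r i ∧ (∑ a ∈ D i, a) % (k + 1) = 0) := by
  obtain ⟨s, rfl⟩ := hke.two_dvd
  have hr' : ∀ i ∈ Icc 1 t, r i = 3 * (r i % 2) + 2 * (r i / 2 - r i % 2) := fun i hi => by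
    have := hr i hi
    omega
  have hcount :
      2 * s = 3 * ∑ i ∈ Icc 1 t, r i % 2 + 2 * ∑ i ∈ Icc 1 t, (r i / 2 - r i % 2) := by
    rw [hsum, sum_congr rfl hr', sum_add_distrib, mul_sum, mul_sum]
  set n := (∑ i ∈ Icc 1 t, r i % 2) / 2
  have hs : 3 * n ≤ s := by omega
  have ha := isSkolemOrHooked_skolem n
  obtain ⟨D, hD, hDunion, hDi⟩ := exists_zero_sum_partition_of_atoms (Icc 1 t) r hr (2 * s + 1)
    (Icc 1 n ×ˢ univ) (freePairIndices s n (skolem n)) (atom s n (skolem n))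
    (pairwiseDisjoint_atom hs ha) (fun p hp => card_triple hs ha (mem_product.1 hp).1 p.2)
    (fun j _ => card_mirrorPair s j) (dvd_sum_atom hs ha)
    (by rw [card_product, Nat.card_Icc, card_univ, Fintype.card_bool]; omega)
    (by rw [card_freePairIndices hs ha]; omega)
  exact ⟨D, fun i hi j hj hij => hD hi hj hij, hDunion.trans (biUnion_atom hs ha),
    fun i hi => ⟨(hDi i hi).1, Nat.mod_eq_zero_of_dvd (hDi i hi).2⟩⟩

/-- **Zero-sum partition, even case.**
Let `k` be an even positive integer written as `k = r 1 + r 2 + ⋯ + r t` with every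
`r i ≥ 2`. Then `{1, …, k}` can be partitioned into pairwise disjoint subsets
`D 1, …, D t` with `|D i| = r i` whose element sums are all `≡ 0 (mod k + 1)`. -/
theorem zero_sum_partition_sizes_even (k t : ℕ) (hk : 0 < k) (hke : Even k)
    (r : ℕ → ℕ) (hr : ∀ i ∈ Finset.Icc 1 t, 2 ≤ r i)
    (hsum : k = ∑ i ∈ Finset.Icc 1 t, r i) :
    ∃ D : ℕ → Finset ℕ,
      (∀ i ∈ Finset.Icc 1 t, ∀ j ∈ Finset.Icc 1 t, i ≠ j → Disjoint (D i) (D j)) ∧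
      ((Finset.Icc 1 t).biUnion D = Finset.Icc 1 k) ∧
      (∀ i ∈ Finset.Icc 1 t, (D i).card = r i ∧ (∑ a ∈ D i, a) % (k + 1) = 0) :=
  zero_sum_partition_sizes_even_general k t hke r hr hsum
end
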